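/- Let $v : S \to \mathbb{R}$ with $S \subseteq \mathbb{R}^N$ be Hölder continuous with constant $A \geq 0$ and exponent $\beta \in (0,1]$, i.e., $|v(x)-v(x')| \leq A \|x-x'\|_2^{\beta}$ for all $x, x' \in S$. Let $X$ be an $S$-valued random variable with finite second moments. Then $\mathrm{Var}[v(X)] \leq \frac{A^2}{2^{1-\beta}} \left( \sum_{i=1}^N \mathrm{Var}[X_i] \right)^{\beta}$. -/

import Mathlib

/-!
Let `X'` be an independent copy of `X`. Then `Var[v(X)] = E[(v(X) - v(X'))²] / 2`, and the Hölder
condition bounds the integrand by `A² (‖X - X'‖²)^β`. Since `t ↦ t^β` is concave, Jensen's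
inequality gives `E[(‖X - X'‖²)^β] ≤ (E‖X - X'‖²)^β`, and `E‖X - X'‖² = 2 ∑ᵢ Var[Xᵢ]`.
-/

open MeasureTheory ProbabilityTheory

section Symmetrization

variable {Ω : Type*} [MeasurableSpace Ω] {μ : Measure Ω} [IsProbabilityMeasure μ]

lemma MeasureTheory.MemLp.sub_prod {g : Ω → ℝ} (hg : MemLp g 2 μ) :
    MemLp (fun p : Ω × Ω => g p.1 - g p.2) 2 (μ.prod μ) :=
  (hg.comp_fst μ).sub (hg.comp_snd μ)

lemma integral_sub_sq_prod {g : Ω → ℝ} (hg : MemLp g 2 μ) :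
    ∫ p, (g p.1 - g p.2) ^ 2 ∂(μ.prod μ) = 2 * Var[g; μ] := by
  have hmean : ∫ p, (g p.1 - g p.2) ∂(μ.prod μ) = 0 := by
    rw [integral_sub ((hg.comp_fst μ).integrable one_le_two)
      ((hg.comp_snd μ).integrable one_le_two), integral_fun_fst, integral_fun_snd, sub_self]
  calc ∫ p, (g p.1 - g p.2) ^ 2 ∂(μ.prod μ)
      = Var[fun p => g p.1 + (-g) p.2; μ.prod μ] := by
        simp only [Pi.neg_apply, ← sub_eq_add_neg]
        exact (variance_of_integral_eq_zero hg.sub_prod.aemeasurable hmean).symm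
    _ = 2 * Var[g; μ] := by
        rw [variance_add_prod hg hg.neg, variance_neg, two_mul]

lemma integrable_norm_sub_sq_prod {ι : Type*} [Fintype ι] {X : Ω → EuclideanSpace ℝ ι}
    (hX : ∀ i, MemLp (fun ω => X ω i) 2 μ) :
    Integrable (fun p : Ω × Ω => ‖X p.1 - X p.2‖ ^ 2) (μ.prod μ) := by
  simp only [EuclideanSpace.real_norm_sq_eq, PiLp.sub_apply]
  exact integrable_finsetSum _ fun i _ => (hX i).sub_prod.integrable_sq

lemma integral_norm_sub_sq_prod {ι : Type*} [Fintype ι] {X : Ω → EuclideanSpace ℝ ι}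
    (hX : ∀ i, MemLp (fun ω => X ω i) 2 μ) :
    ∫ p, ‖X p.1 - X p.2‖ ^ 2 ∂(μ.prod μ) = 2 * ∑ i, Var[fun ω => X ω i; μ] := by
  simp only [EuclideanSpace.real_norm_sq_eq, PiLp.sub_apply]
  rw [integral_finsetSum _ fun i _ => (hX i).sub_prod.integrable_sq, Finset.mul_sum]
  exact Finset.sum_congr rfl fun i _ => integral_sub_sq_prod (hX i)

end Symmetrization

section Concavity

variable {α : Type*} [MeasurableSpace α] {μ : Measure α} {f : α → ℝ} {β : ℝ}

lemma MeasureTheory.Integrable.rpow_of_le_one [IsFiniteMeasure μ] (hf : Integrable f μ)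
    (hf0 : ∀ᵐ x ∂μ, 0 ≤ f x) (hβ0 : 0 ≤ β) (hβ1 : β ≤ 1) :
    Integrable (fun x => f x ^ β) μ := by
  have hLp := (memLp_one_iff_integrable.2 hf).norm_rpow_div (ENNReal.ofReal β)
  rw [ENNReal.toReal_ofReal hβ0] at hLp
  refine (memLp_one_iff_integrable.1 (hLp.mono_exponent ?_)).congr ?_
  · rw [ENNReal.le_div_iff_mul_le (by simp) (by simp), one_mul]
    exact ENNReal.ofReal_le_one.2 hβ1
  · filter_upwards [hf0] with x hx
    rw [Real.norm_of_nonneg hx]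

lemma integral_rpow_le_rpow_integral [IsProbabilityMeasure μ] (hf : Integrable f μ)
    (hf0 : ∀ᵐ x ∂μ, 0 ≤ f x) (hβ0 : 0 ≤ β) (hβ1 : β ≤ 1) :
    ∫ x, f x ^ β ∂μ ≤ (∫ x, f x ∂μ) ^ β :=
  (Real.concaveOn_rpow hβ0 hβ1).le_map_integral (Real.continuous_rpow_const hβ0).continuousOn
    isClosed_Ici hf0 hf (hf.rpow_of_le_one hf0 hβ0 hβ1)

end Concavity

theorem holder_variance_bound_general
    {Ω : Type*} [MeasureSpace Ω] [IsProbabilityMeasure (ℙ : Measure Ω)]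
    {N : ℕ} (S : Set (EuclideanSpace ℝ (Fin N)))
    (v : EuclideanSpace ℝ (Fin N) → ℝ) (A β : ℝ)
    (hβ0 : 0 < β) (hβ1 : β ≤ 1)
    (hHolder : ∀ x ∈ S, ∀ x' ∈ S, |v x - v x'| ≤ A * ‖x - x'‖ ^ β)
    (X : Ω → EuclideanSpace ℝ (Fin N))
    (hXS : ∀ ω, X ω ∈ S)
    (hX2 : ∀ i, MemLp (fun ω => X ω i) 2 ℙ)
    (hv2 : MemLp (fun ω => v (X ω)) 2 ℙ) :
    variance (fun ω => v (X ω)) ℙ ≤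
      A ^ 2 / 2 ^ (1 - β) *
        (∑ i : Fin N, variance (fun ω => X ω i) ℙ) ^ β := by
  set G : Ω × Ω → ℝ := fun p => ‖X p.1 - X p.2‖ ^ 2
  have hG0 : ∀ᵐ p ∂(ℙ : Measure Ω).prod ℙ, 0 ≤ G p := .of_forall fun _ => sq_nonneg _
  have hG : Integrable G ((ℙ : Measure Ω).prod ℙ) := integrable_norm_sub_sq_prod hX2
  have hGβ := hG.rpow_of_le_one hG0 hβ0.le hβ1
  have hsq (p : Ω × Ω) : (v (X p.1) - v (X p.2)) ^ 2 ≤ A ^ 2 * G p ^ β := by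
    calc (v (X p.1) - v (X p.2)) ^ 2 = |v (X p.1) - v (X p.2)| ^ 2 := (sq_abs _).symm
      _ ≤ (A * ‖X p.1 - X p.2‖ ^ β) ^ 2 :=
        pow_le_pow_left₀ (abs_nonneg _) (hHolder _ (hXS p.1) _ (hXS p.2)) 2
      _ = A ^ 2 * G p ^ β := by rw [mul_pow, Real.rpow_pow_comm (norm_nonneg _)]
  have hs : 0 ≤ ∑ i : Fin N, variance (fun ω => X ω i) ℙ :=
    Finset.sum_nonneg fun i _ => variance_nonneg _ _
  calc variance (fun ω => v (X ω)) ℙ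
      = (∫ p, (v (X p.1) - v (X p.2)) ^ 2 ∂(ℙ : Measure Ω).prod ℙ) / 2 := by
        rw [integral_sub_sq_prod hv2]; ring
    _ ≤ A ^ 2 * (∫ p, G p ^ β ∂(ℙ : Measure Ω).prod ℙ) / 2 := by
        rw [← integral_const_mul]
        gcongr ?_ / 2
        exact integral_mono hv2.sub_prod.integrable_sq (hGβ.const_mul _) hsq
    _ ≤ A ^ 2 * (∫ p, G p ∂(ℙ : Measure Ω).prod ℙ) ^ β / 2 := by
        gcongr
        exact integral_rpow_le_rpow_integral hG hG0 hβ0.le hβ1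
    _ = A ^ 2 / 2 ^ (1 - β) * (∑ i : Fin N, variance (fun ω => X ω i) ℙ) ^ β := by
        rw [integral_norm_sub_sq_prod hX2, Real.mul_rpow zero_le_two hs,
          Real.rpow_sub zero_lt_two, Real.rpow_one]
        field_simp

theorem holder_variance_bound
    {Ω : Type*} [MeasureSpace Ω] [IsProbabilityMeasure (ℙ : Measure Ω)]
    {N : ℕ} (S : Set (EuclideanSpace ℝ (Fin N)))
    (v : EuclideanSpace ℝ (Fin N) → ℝ) (A β : ℝ)
    (hA : 0 ≤ A) (hβ0 : 0 < β) (hβ1 : β ≤ 1)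
    (hHolder : ∀ x ∈ S, ∀ x' ∈ S, |v x - v x'| ≤ A * ‖x - x'‖ ^ β)
    (X : Ω → EuclideanSpace ℝ (Fin N)) (hX : Measurable X)
    (hXS : ∀ ω, X ω ∈ S)
    (hX2 : ∀ i, MemLp (fun ω => X ω i) 2 ℙ)
    (hv2 : MemLp (fun ω => v (X ω)) 2 ℙ) :
    variance (fun ω => v (X ω)) ℙ ≤
      A ^ 2 / 2 ^ (1 - β) *
        (∑ i : Fin N, variance (fun ω => X ω i) ℙ) ^ β :=
  holder_variance_bound_general S v A β hβ0 hβ1 hHolder X hXS hX2 hv2
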